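/- Let A be a residuated lattice, F a filter of A, and P a prime filter of A with F ⊆ P. Then D_F(P) = {a ∈ A | x ∨ a ∈ F for some x ∉ P} is a filter of A and D_F(P) ⊆ P. -/

import Mathlib

class ResiduatedLattice (α : Type*) extends Lattice α, CommMonoid α, BoundedOrder α where
  rimp : α → α → α
  one_eq_top : (1 : α) = ⊤
  adjunction : ∀ x y z : α, x * y ≤ z ↔ x ≤ rimp y z

variable {α : Type*} [ResiduatedLattice α]

/-- A filter of a residuated lattice: nonempty, closed under `⊙` and upward closed. -/
def IsFilter (F : Set α) : Prop :=
  F.Nonempty ∧ (∀ x ∈ F, ∀ y ∈ F, x * y ∈ F) ∧ ∀ x ∈ F, ∀ y : α, x ≤ y → y ∈ F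

/-- A prime filter: a proper filter such that `x ⊔ y ∈ P` implies `x ∈ P` or `y ∈ P`. -/
def IsPrimeFilter (P : Set α) : Prop :=
  IsFilter P ∧ P ≠ Set.univ ∧ ∀ x y : α, x ⊔ y ∈ P → x ∈ P ∨ y ∈ P

/-- A `∨`-closed subset: nonempty and closed under join. -/
def IsJoinClosed (C : Set α) : Prop :=
  C.Nonempty ∧ ∀ x ∈ C, ∀ y ∈ C, x ⊔ y ∈ C

/-- The filter generated by a set. -/
def filterGen (X : Set α) : Set α := ⋂₀ {G : Set α | IsFilter G ∧ X ⊆ G}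

/-- An `X`-minimal prime filter: prime, contains `X`, minimal among primes containing `X`. -/
def IsMinPrimeOver (X P : Set α) : Prop :=
  IsPrimeFilter P ∧ X ⊆ P ∧ ∀ Q : Set α, IsPrimeFilter Q → X ⊆ Q → Q ⊆ P → Q = P

/-- `ω_F(X) = {a | x ∨ a ∈ F for some x ∈ X}`. -/
def omegaF (F X : Set α) : Set α := {a : α | ∃ x ∈ X, x ⊔ a ∈ F}

/-- The coannihilator `(F : x) = {a | x ∨ a ∈ F}`. -/
def coann (F : Set α) (x : α) : Set α := {a : α | x ⊔ a ∈ F}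

/-- `D_F(H) = {a | x ∨ a ∈ F for some x ∉ H}`, the set of `F`-divisors of `H`. -/
def divisorsF (F H : Set α) : Set α := {a : α | ∃ x ∉ H, x ⊔ a ∈ F}

/-- A lattice ideal: nonempty, closed under join and downward closed. -/
def IsLatticeIdeal (I : Set α) : Prop :=
  I.Nonempty ∧ (∀ x ∈ I, ∀ y ∈ I, x ⊔ y ∈ I) ∧ ∀ x y : α, x ≤ y → y ∈ I → x ∈ I

/-- The lattice ideal generated by a set. -/
def idealGen (X : Set α) : Set α := ⋂₀ {I : Set α | IsLatticeIdeal I ∧ X ⊆ I}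

/-- An `ω_F`-filter: a filter of the form `ω_F(I)` for some lattice ideal `I`. -/
def IsOmegaFilter (F H : Set α) : Prop :=
  IsFilter H ∧ ∃ I : Set α, IsLatticeIdeal I ∧ H = omegaF F I

/-! `D_F(P) = ω_F(A ∖ P)`, and `A ∖ P` is closed under `∨` because `P` is prime. For any
`∨`-closed `C`, `ω_F(C)` is a filter: the product of witnesses `x ∨ a, y ∨ b ∈ F` lies
below `(x ∨ y) ∨ a ⊙ b`, since `⊙` distributes over `∨` and is decreasing (`1 = ⊤`).
Finally, if `x ∉ P` and `x ∨ a ∈ F ⊆ P`, primality forces `a ∈ P`. -/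

namespace ResiduatedLattice

theorem sup_mul_le_iff {x y z w : α} : (x ⊔ y) * z ≤ w ↔ x * z ≤ w ∧ y * z ≤ w := by
  simp only [adjunction, sup_le_iff]

theorem mul_le_mul_left {x y : α} (z : α) (h : x ≤ y) : z * x ≤ z * y := by
  rw [mul_comm z x, adjunction]
  exact h.trans ((adjunction _ _ _).mp (mul_comm y z).le)

theorem mul_le_left (x y : α) : x * y ≤ x :=
  calc x * y ≤ x * 1 := mul_le_mul_left x (one_eq_top (α := α) ▸ le_top)
    _ = x := mul_one x

theorem sup_mul_sup_le (x y a b : α) : (x ⊔ a) * (y ⊔ b) ≤ (x ⊔ y) ⊔ a * b := by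
  refine sup_mul_le_iff.mpr ⟨(mul_le_left x _).trans (le_sup_left.trans le_sup_left), ?_⟩
  rw [mul_comm, sup_mul_le_iff]
  exact ⟨(mul_le_left y a).trans (le_sup_right.trans le_sup_left),
    (mul_comm b a).le.trans le_sup_right⟩

end ResiduatedLattice

open ResiduatedLattice

theorem IsFilter.mem_of_le {F : Set α} (hF : IsFilter F) {x y : α} (hx : x ∈ F) (h : x ≤ y) :
    y ∈ F :=
  hF.2.2 x hx y h

theorem IsFilter.top_mem {F : Set α} (hF : IsFilter F) : ⊤ ∈ F :=
  let ⟨_, hx⟩ := hF.1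
  hF.mem_of_le hx le_top

theorem IsPrimeFilter.isJoinClosed_compl {P : Set α} (hP : IsPrimeFilter P) :
    IsJoinClosed Pᶜ := by
  refine ⟨Set.nonempty_compl.mpr hP.2.1, fun x hx y hy hxy => ?_⟩
  exact (hP.2.2 x y hxy).elim hx hy

theorem isFilter_omegaF {F C : Set α} (hF : IsFilter F) (hC : IsJoinClosed C) :
    IsFilter (omegaF F C) := by
  refine ⟨?_, ?_, ?_⟩
  · obtain ⟨x, hx⟩ := hC.1
    exact ⟨⊤, x, hx, by simpa only [le_top, sup_of_le_right] using hF.top_mem⟩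
  · rintro a ⟨x, hx, hxa⟩ b ⟨y, hy, hyb⟩
    exact ⟨x ⊔ y, hC.2 x hx y hy, hF.mem_of_le (hF.2.1 _ hxa _ hyb) (sup_mul_sup_le x y a b)⟩
  · rintro a ⟨x, hx, hxa⟩ b hab
    exact ⟨x, hx, hF.mem_of_le hxa (sup_le_sup_left hab x)⟩

theorem divisorsF_eq_omegaF_compl (F H : Set α) : divisorsF F H = omegaF F Hᶜ := rfl

theorem divisorsF_subset {F P : Set α} (hP : IsPrimeFilter P) (hFP : F ⊆ P) :
    divisorsF F P ⊆ P := by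
  rintro a ⟨x, hx, hxa⟩
  exact (hP.2.2 x a (hFP hxa)).resolve_left hx

/-- Proposition 3.12: for a prime filter `P ⊇ F`, `D_F(P)` is a filter
contained in `P`. -/
theorem stmt_7 (F P : Set α) (hF : IsFilter F) (hP : IsPrimeFilter P) (hFP : F ⊆ P) :
    IsFilter (divisorsF F P) ∧ divisorsF F P ⊆ P :=
  ⟨divisorsF_eq_omegaF_compl F P ▸ isFilter_omegaF hF hP.isJoinClosed_compl,
    divisorsF_subset hP hFP⟩
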